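/- For f ∈ L¹(ℝ), the SAFT intertwines A-translation with modulation: 𝓕_A(T^A_x f)(ω) = ρ_A(x) e^{-ixω/b} 𝓕_A f(ω) for all x, ω ∈ ℝ. -/

import Mathlib

/-
Substituting `t ↦ t + x` in the integral defining `𝓕_A (T^A_x f)(ω)`, the chirp `e^{-i(a/b)xt}` of the
translation cancels the cross term `e^{i a t x / b}` of the shifted kernel, and what remains of the kernel
phase at `t + x` beyond the phase at `t` is `(ax² + 2px - 2xω)/(2b)`, i.e. the factor `ρ_A(x) e^{-ixω/b}`.
-/

open MeasureTheory

/-- The special affine Fourier transform with parameter set `A = {a,b,c,d,p,q}`. -/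
noncomputable def saft (a b d p q : ℝ) (f : ℝ → ℂ) (ω : ℝ) : ℂ :=
  (Real.sqrt (2 * Real.pi * |b|) : ℂ)⁻¹ *
    ∫ t : ℝ, f t * Complex.exp (Complex.I / (2 * (b : ℂ)) *
      ((a * t ^ 2 + 2 * p * t - 2 * t * ω + d * ω ^ 2 + 2 * (b * q - d * p) * ω : ℝ) : ℂ))

/-- The `A`-translation `T^A_x f(t) = e^{-i(a/b)x(t-x)} f(t-x)`. -/
noncomputable def Atrans (a b x : ℝ) (f : ℝ → ℂ) (t : ℝ) : ℂ :=
  Complex.exp (-Complex.I * ((a : ℂ) / b) * x * ((t : ℂ) - x)) * f (t - x)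

/-- `ρ_A(t) = exp(i/(2b)(at² + 2pt))`. -/
noncomputable def rhoA (a b p t : ℝ) : ℂ :=
  Complex.exp (Complex.I / (2 * (b : ℂ)) * ((a * t ^ 2 + 2 * p * t : ℝ) : ℂ))

noncomputable def saftKernel (a b d p q ω t : ℝ) : ℂ :=
  Complex.exp (Complex.I / (2 * (b : ℂ)) *
    ((a * t ^ 2 + 2 * p * t - 2 * t * ω + d * ω ^ 2 + 2 * (b * q - d * p) * ω : ℝ) : ℂ))

theorem saft_eq_integral_mul_saftKernel (a b d p q : ℝ) (f : ℝ → ℂ) (ω : ℝ) :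
    saft a b d p q f ω =
      (Real.sqrt (2 * Real.pi * |b|) : ℂ)⁻¹ * ∫ t : ℝ, f t * saftKernel a b d p q ω t :=
  rfl

theorem Atrans_add_mul_saftKernel_add (a b d p q x ω : ℝ) (f : ℝ → ℂ) (t : ℝ) :
    Atrans a b x f (t + x) * saftKernel a b d p q ω (t + x) =
      rhoA a b p x * Complex.exp (-Complex.I * x * ω / b) * (f t * saftKernel a b d p q ω t) := by
  have phase : -Complex.I * ((a : ℂ) / b) * x * (((t + x : ℝ) : ℂ) - x) +
        Complex.I / (2 * (b : ℂ)) *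
          ((a * (t + x) ^ 2 + 2 * p * (t + x) - 2 * (t + x) * ω + d * ω ^ 2 +
            2 * (b * q - d * p) * ω : ℝ) : ℂ) =
      Complex.I / (2 * (b : ℂ)) * ((a * x ^ 2 + 2 * p * x : ℝ) : ℂ) +
        -Complex.I * x * ω / b +
        Complex.I / (2 * (b : ℂ)) *
          ((a * t ^ 2 + 2 * p * t - 2 * t * ω + d * ω ^ 2 + 2 * (b * q - d * p) * ω : ℝ) : ℂ) := by
    push_cast
    ring
  simp only [Atrans, saftKernel, rhoA, add_sub_cancel_right]
  rw [mul_right_comm, ← Complex.exp_add, phase, Complex.exp_add, Complex.exp_add]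
  ring

theorem saft_Atrans_general (a b d p q : ℝ) (f : ℝ → ℂ) (x ω : ℝ) :
    saft a b d p q (Atrans a b x f) ω =
      rhoA a b p x * Complex.exp (-Complex.I * x * ω / b) * saft a b d p q f ω := by
  rw [saft_eq_integral_mul_saftKernel, saft_eq_integral_mul_saftKernel,
    ← integral_add_right_eq_self _ x]
  simp only [Atrans_add_mul_saftKernel_add, integral_const_mul]
  ring

/-- The SAFT intertwines `A`-translation with modulation. -/
theorem saft_Atrans (a b c d p q : ℝ) (hb : b ≠ 0) (hA : a * d - b * c = 1)
    (f : ℝ → ℂ) (hf : Integrable f) (x ω : ℝ) :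
    saft a b d p q (Atrans a b x f) ω =
      rhoA a b p x * Complex.exp (-Complex.I * x * ω / b) * saft a b d p q f ω :=
  saft_Atrans_general a b d p q f x ω
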